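/- arXiv:2003.14060 — 4 statements merged into one kernel-verified Lean document; each statement's English description precedes it below -/
import Mathlib

section
/- Let C : [0,∞) ⇝ ℝⁿ satisfy Hypothesis (H_C) and let L > 0. Then for all s, t ≥ 0, all x ∈ C(s), x' ∈ C(t), and every ξ ∈ N_{C(s)}(x) with ‖ξ‖ ≤ L, one has ξ·(x' − x) ≤ (L/r)‖x' − x‖² + (L·L_C²/r)(s − t)² + L·L_C·|s − t|. -/
open scoped Pointwise RealInnerProductSpace ENNReal
open Set Metric MeasureTheory

variable {E : Type*} [NormedAddCommGroup E] [InnerProductSpace ℝ E]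

/-- Proximal normal cone to `K` at `x` (empty when `x ∉ K`):
`v ∈ N_K(x)` iff `x ∈ K` and there is `σ ≥ 0` with `⟪v, y - x⟫ ≤ σ‖y - x‖²` for all `y ∈ K`. -/
def proxNormalCone (K : Set E) (x : E) : Set E :=
  {v | x ∈ K ∧ ∃ σ : ℝ, 0 ≤ σ ∧ ∀ y ∈ K, ⟪v, y - x⟫ ≤ σ * ‖y - x‖ ^ 2}

/-- `r`-prox-regularity of a closed set. -/
def ProxRegular (r : ℝ) (C : Set E) : Prop :=
  ∀ x ∈ C, ∀ y ∈ C, ∀ ζ ∈ proxNormalCone C x,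
    ⟪ζ, y - x⟫ ≤ 1 / (2 * r) * ‖ζ‖ * ‖y - x‖ ^ 2

/-- Hypothesis (H_C): values are nonempty, compact, `r`-prox-regular; `L_C`-Lipschitz
for the Hausdorff distance. -/
structure HypC (r L_C : ℝ) (C : ℝ → Set E) : Prop where
  nonempty : ∀ t, 0 ≤ t → (C t).Nonempty
  isCompact : ∀ t, 0 ≤ t → IsCompact (C t)
  proxRegular : ∀ t, 0 ≤ t → ProxRegular r (C t)
  lipschitz : ∀ s t, 0 ≤ s → 0 ≤ t → hausdorffDist (C s) (C t) ≤ L_C * |s - t|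

/-- Hypothesis (H_G): nonempty, closed, convex values, bounded by `M`, `L_G`-Lipschitz
for the Hausdorff distance. -/
structure HypG (M L_G : ℝ) (G : ℝ → E → Set E) : Prop where
  nonempty : ∀ t x, (G t x).Nonempty
  isClosed : ∀ t x, IsClosed (G t x)
  convex : ∀ t x, Convex ℝ (G t x)
  bounded : ∀ t x, ∀ v ∈ G t x, ‖v‖ ≤ M
  lipschitz : ∀ s t (x y : E), hausdorffDist (G s x) (G t y) ≤ L_G * (|s - t| + ‖x - y‖)

/-- Solution of the perturbed sweeping process `ẋ(t) ∈ -N_{C(t)}(x(t)) + G(t, x(t))`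
on `[t0, T]`: an (absolutely continuous) integral of an integrable derivative `x'`
satisfying the differential inclusion a.e., with `x(t) ∈ C(t)` for all `t ∈ [t0, T]`. -/
def IsSweepingSol (C : ℝ → Set E) (G : ℝ → E → Set E) (t0 T : ℝ) (x : ℝ → E) : Prop :=
  (∀ t ∈ Icc t0 T, x t ∈ C t) ∧
  ∃ x' : ℝ → E, IntegrableOn x' (Icc t0 T) ∧
    (∀ t ∈ Icc t0 T, x t = x t0 + ∫ s in t0..t, x' s) ∧
    ∀ᵐ t ∂(volume.restrict (Icc t0 T)),
      x' t ∈ -proxNormalCone (C t) (x t) + G t (x t)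

/-- Minimum time to reach the target `S` subject to the perturbed sweeping process,
starting at `x0 ∈ C t0` at time `t0` (`+∞` if `S` is never reached). -/
noncomputable def minTime (C : ℝ → Set E) (G : ℝ → E → Set E) (S : Set E)
    (t0 : ℝ) (x0 : E) : ℝ≥0∞ :=
  sInf (ENNReal.ofReal '' {a : ℝ | 0 ≤ a ∧ ∃ x : ℝ → E,
    IsSweepingSol C G t0 (t0 + a) x ∧ x t0 = x0 ∧ x (t0 + a) ∈ S})

/-- Proximal normal cone in the product space `ℝ × E` (with the Euclidean product
inner product `⟪(a,v),(b,w)⟫ = a*b + ⟪v,w⟫`). -/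
def proxNormalCone2 (K : Set (ℝ × E)) (q : ℝ × E) : Set (ℝ × E) :=
  {p | q ∈ K ∧ ∃ σ : ℝ, 0 ≤ σ ∧ ∀ q' ∈ K,
    p.1 * (q'.1 - q.1) + ⟪p.2, q'.2 - q.2⟫ ≤ σ * ((q'.1 - q.1) ^ 2 + ‖q'.2 - q.2‖ ^ 2)}

/-- Proximal normal cone in the product space `ℝ × E × ℝ`. -/
def proxNormalCone3 (K : Set (ℝ × E × ℝ)) (q : ℝ × E × ℝ) : Set (ℝ × E × ℝ) :=
  {p | q ∈ K ∧ ∃ σ : ℝ, 0 ≤ σ ∧ ∀ q' ∈ K,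
    p.1 * (q'.1 - q.1) + ⟪p.2.1, q'.2.1 - q.2.1⟫ + p.2.2 * (q'.2.2 - q.2.2) ≤
      σ * ((q'.1 - q.1) ^ 2 + ‖q'.2.1 - q.2.1‖ ^ 2 + (q'.2.2 - q.2.2) ^ 2)}

/-- Proximal normal cone in the product space `E × ℝ`. -/
def proxNormalConeER (K : Set (E × ℝ)) (q : E × ℝ) : Set (E × ℝ) :=
  {p | q ∈ K ∧ ∃ σ : ℝ, 0 ≤ σ ∧ ∀ q' ∈ K,
    ⟪p.1, q'.1 - q.1⟫ + p.2 * (q'.2 - q.2) ≤ σ * (‖q'.1 - q.1‖ ^ 2 + (q'.2 - q.2) ^ 2)}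

/-- The graph of the moving set `C`, i.e. `{(t,x) : t ≥ 0, x ∈ C(t)}`. -/
def graphSet (C : ℝ → Set E) : Set (ℝ × E) := {q | 0 ≤ q.1 ∧ q.2 ∈ C q.1}

/-! Pick `y ∈ C(s)` nearest to `x' ∈ C(t)`, so `‖x' - y‖ ≤ L_C |s - t|` by the Hausdorff
Lipschitz bound. Prox-regularity of `C(s)` controls `ξ·(y - x)` and Cauchy–Schwarz controls
`ξ·(x' - y)`; the factor `2` lost in `‖y - x‖² ≤ 2‖x' - y‖² + 2‖x' - x‖²` turns `1/(2r)` into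
`1/r`. -/

theorem IsCompact.exists_dist_le_hausdorffDist {α : Type*} [PseudoMetricSpace α]
    {A B : Set α} (hA : IsCompact A) (hA₀ : A.Nonempty) (hB : Bornology.IsBounded B)
    {b : α} (hb : b ∈ B) : ∃ a ∈ A, dist b a ≤ hausdorffDist B A := by
  obtain ⟨a, ha, hba⟩ := hA.exists_infDist_eq_dist hA₀ b
  refine ⟨a, ha, hba ▸ infDist_le_hausdorffDist_of_mem hb ?_⟩
  exact hausdorffEDist_ne_top_of_nonempty_of_bounded ⟨b, hb⟩ hA₀ hB hA.isBounded

theorem ProxRegular.inner_sub_le {r : ℝ} {K : Set E} (hK : ProxRegular r K) (hr : 0 < r)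
    {x y : E} (hx : x ∈ K) (hy : y ∈ K) {ξ : E} (hξ : ξ ∈ proxNormalCone K x) (z : E) :
    ⟪ξ, z - x⟫ ≤ ‖ξ‖ / r * ‖z - x‖ ^ 2 + ‖ξ‖ / r * ‖z - y‖ ^ 2 + ‖ξ‖ * ‖z - y‖ := by
  have hsplit : ⟪ξ, z - x⟫ = ⟪ξ, y - x⟫ + ⟪ξ, z - y⟫ := by
    rw [← inner_add_right, sub_add_sub_cancel']
  have hyx : ‖y - x‖ ^ 2 ≤ 2 * (‖z - y‖ ^ 2 + ‖z - x‖ ^ 2) := by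
    calc ‖y - x‖ ^ 2 ≤ (‖z - y‖ + ‖z - x‖) ^ 2 := by
          gcongr
          simpa only [norm_sub_rev y z] using norm_sub_le_norm_sub_add_norm_sub y z x
      _ ≤ 2 * (‖z - y‖ ^ 2 + ‖z - x‖ ^ 2) := add_sq_le
  calc ⟪ξ, z - x⟫ ≤ 1 / (2 * r) * ‖ξ‖ * ‖y - x‖ ^ 2 + ‖ξ‖ * ‖z - y‖ := by
        rw [hsplit]
        exact add_le_add (hK x hx y hy ξ hξ) (real_inner_le_norm ξ _)
    _ ≤ 1 / (2 * r) * ‖ξ‖ * (2 * (‖z - y‖ ^ 2 + ‖z - x‖ ^ 2)) + ‖ξ‖ * ‖z - y‖ := by gcongr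
    _ = ‖ξ‖ / r * ‖z - x‖ ^ 2 + ‖ξ‖ / r * ‖z - y‖ ^ 2 + ‖ξ‖ * ‖z - y‖ := by
        field_simp
        ring

theorem normal_cone_time_estimate_general {n : ℕ} (r L_C L : ℝ) (hr : 0 < r)
    (C : ℝ → Set (EuclideanSpace ℝ (Fin n))) (hC : HypC r L_C C)
    (s t : ℝ) (hs : 0 ≤ s) (ht : 0 ≤ t)
    (x x' : EuclideanSpace ℝ (Fin n)) (hx : x ∈ C s) (hx' : x' ∈ C t)
    (ξ : EuclideanSpace ℝ (Fin n)) (hξ : ξ ∈ proxNormalCone (C s) x) (hξL : ‖ξ‖ ≤ L) :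
    ⟪ξ, x' - x⟫ ≤ L / r * ‖x' - x‖ ^ 2 + L * L_C ^ 2 / r * (s - t) ^ 2 + L * L_C * |s - t| := by
  obtain ⟨y, hy, hx'y⟩ := (hC.isCompact s hs).exists_dist_le_hausdorffDist ⟨x, hx⟩
    (hC.isCompact t ht).isBounded hx'
  have hδ : ‖x' - y‖ ≤ L_C * |s - t| := by
    rw [← dist_eq_norm, abs_sub_comm]
    exact hx'y.trans (hC.lipschitz t s ht hs)
  have hL : 0 ≤ L := (norm_nonneg ξ).trans hξL
  calc ⟪ξ, x' - x⟫ ≤ ‖ξ‖ / r * ‖x' - x‖ ^ 2 + ‖ξ‖ / r * ‖x' - y‖ ^ 2 + ‖ξ‖ * ‖x' - y‖ :=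
        (hC.proxRegular s hs).inner_sub_le hr hx hy hξ x'
    _ ≤ L / r * ‖x' - x‖ ^ 2 + L / r * (L_C * |s - t|) ^ 2 + L * (L_C * |s - t|) := by
        gcongr
    _ = L / r * ‖x' - x‖ ^ 2 + L * L_C ^ 2 / r * (s - t) ^ 2 + L * L_C * |s - t| := by
        rw [mul_pow, sq_abs]
        ring

/-- Under Hypothesis (H_C), for `s, t ≥ 0`, `x ∈ C(s)`, `x' ∈ C(t)` and
`ξ ∈ N_{C(s)}(x)` with `‖ξ‖ ≤ L`, one has
`ξ·(x' − x) ≤ (L/r)‖x' − x‖² + (L L_C²/r)(s − t)² + L L_C |s − t|`. -/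
theorem normal_cone_time_estimate {n : ℕ} (r L_C L : ℝ) (hr : 0 < r) (hL : 0 < L)
    (C : ℝ → Set (EuclideanSpace ℝ (Fin n))) (hC : HypC r L_C C)
    (s t : ℝ) (hs : 0 ≤ s) (ht : 0 ≤ t)
    (x x' : EuclideanSpace ℝ (Fin n)) (hx : x ∈ C s) (hx' : x' ∈ C t)
    (ξ : EuclideanSpace ℝ (Fin n)) (hξ : ξ ∈ proxNormalCone (C s) x) (hξL : ‖ξ‖ ≤ L) :
    ⟪ξ, x' - x⟫ ≤ L / r * ‖x' - x‖ ^ 2 + L * L_C ^ 2 / r * (s - t) ^ 2 + L * L_C * |s - t| :=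
  normal_cone_time_estimate_general r L_C L hr C hC s t hs ht x x' hx hx' ξ hξ hξL
end

section
/- Assume Hypotheses (H_C) and (H_G), let S ⊆ ℝⁿ be closed, and suppose the minimum time function T is upper semicontinuous on graph(C) and not identically +∞. Then the hypograph of T is strongly invariant for the augmented dynamics Γ(τ,x,λ) = {1} × (−N_{C(τ)}(x) + G(τ,x)) × {−1}; precisely: for every (t₀,x₀) ∈ graph(C), every real λ₀ ≤ T(t₀,x₀), every τ > 0 and every solution x of the perturbed sweeping process on [t₀, t₀ + τ] with x(t₀) = x₀, one has T(t₀ + s, x(t₀ + s)) ≥ λ₀ − s for all s ∈ [0, τ]. -/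
/-!
Solutions of the perturbed sweeping process can be restricted to shorter intervals and
concatenated. Following a solution `x` from `(t₀, x₀)` for time `s` and then any solution that
reaches `S` from `(t₀ + s, x(t₀ + s))` gives the dynamic programming inequality
`T(t₀, x₀) ≤ s + T(t₀ + s, x(t₀ + s))`, hence `T(t₀ + s, x(t₀ + s)) ≥ T(t₀, x₀) - s ≥ λ₀ - s`.
-/

open scoped Pointwise RealInnerProductSpace ENNReal
open Set Metric MeasureTheory

variable {E : Type*} [NormedAddCommGroup E] [InnerProductSpace ℝ E]

section Concatenation

variable {F : Type*} [NormedAddCommGroup F] {f g : ℝ → F} {a b c : ℝ}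

theorem integrableOn_Icc_ite_le (hf : IntegrableOn f (Icc a b)) (hg : IntegrableOn g (Icc b c)) :
    IntegrableOn (fun t => if t ≤ b then f t else g t) (Icc a c) := by
  have hf' : IntegrableOn (fun t => if t ≤ b then f t else g t) (Icc a b) :=
    hf.congr_fun (fun t ht => (if_pos ht.2).symm) measurableSet_Icc
  have hg' : IntegrableOn (fun t => if t ≤ b then f t else g t) (Ioc b c) :=
    (hg.mono_set Ioc_subset_Icc_self).congr_fun
      (fun t ht => (if_neg (not_le.2 ht.1)).symm) measurableSet_Ioc
  exact (hf'.union hg').mono_set Icc_subset_Icc_union_Ioc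

variable [NormedSpace ℝ F]

theorem intervalIntegral_ite_le_of_le {t : ℝ} (hat : a ≤ t) (htb : t ≤ b) :
    ∫ s in a..t, (if s ≤ b then f s else g s) = ∫ s in a..t, f s :=
  intervalIntegral.integral_congr fun _ hs => if_pos ((uIcc_of_le hat ▸ hs).2.trans htb)

theorem intervalIntegral_ite_le_of_ge {t : ℝ} (hbt : b ≤ t) :
    ∫ s in b..t, (if s ≤ b then f s else g s) = ∫ s in b..t, g s :=
  intervalIntegral.integral_congr_ae <| ae_of_all _ fun _ hs =>
    if_neg (not_le.2 (uIoc_of_le hbt ▸ hs).1)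

theorem eq_add_intervalIntegral_ite_le {x y : ℝ → F} (hab : a ≤ b)
    (hf : IntegrableOn f (Icc a b)) (hg : IntegrableOn g (Icc b c))
    (hx : ∀ t ∈ Icc a b, x t = x a + ∫ s in a..t, f s)
    (hy : ∀ t ∈ Icc b c, y t = y b + ∫ s in b..t, g s) (hxy : x b = y b) :
    ∀ t ∈ Icc a c, (if t ≤ b then x t else y t) =
      (if a ≤ b then x a else y a) + ∫ s in a..t, (if s ≤ b then f s else g s) := by
  intro t ht
  rw [if_pos hab]
  by_cases htb : t ≤ b
  · rw [if_pos htb, intervalIntegral_ite_le_of_le ht.1 htb, hx t ⟨ht.1, htb⟩]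
  have hbt : b ≤ t := (not_le.1 htb).le
  have hint := integrableOn_Icc_ite_le hf hg
  have hint_ab := hint.mono_set (Icc_subset_Icc_right (hbt.trans ht.2))
  have hint_bt := hint.mono_set (Icc_subset_Icc hab ht.2)
  rw [if_neg htb, ← intervalIntegral.integral_add_adjacent_intervals
      ((intervalIntegrable_iff_integrableOn_Icc_of_le hab).2 hint_ab)
      ((intervalIntegrable_iff_integrableOn_Icc_of_le hbt).2 hint_bt),
    intervalIntegral_ite_le_of_le hab le_rfl, intervalIntegral_ite_le_of_ge hbt,
    hy t ⟨hbt, ht.2⟩, ← hxy, hx b ⟨hab, le_rfl⟩]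
  abel

end Concatenation

namespace IsSweepingSol

variable {C : ℝ → Set E} {G : ℝ → E → Set E} {a b c : ℝ} {x y : ℝ → E}

theorem mono_right (hx : IsSweepingSol C G a b x) (hcb : c ≤ b) : IsSweepingSol C G a c x := by
  obtain ⟨hmem, x', hint, heq, hae⟩ := hx
  exact ⟨fun t ht => hmem t ⟨ht.1, ht.2.trans hcb⟩, x',
    hint.mono_set (Icc_subset_Icc_right hcb), fun t ht => heq t ⟨ht.1, ht.2.trans hcb⟩,
    ae_mono (Measure.restrict_mono (Icc_subset_Icc_right hcb) le_rfl) hae⟩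

theorem concat (hab : a ≤ b) (hx : IsSweepingSol C G a b x) (hy : IsSweepingSol C G b c y)
    (hxy : x b = y b) :
    IsSweepingSol C G a c (fun t => if t ≤ b then x t else y t) := by
  obtain ⟨hxmem, x', hxint, hxeq, hxae⟩ := hx
  obtain ⟨hymem, y', hyint, hyeq, hyae⟩ := hy
  refine ⟨fun t ht => show (if t ≤ b then x t else y t) ∈ C t from ?_,
    fun t => if t ≤ b then x' t else y' t,
    integrableOn_Icc_ite_le hxint hyint,
    eq_add_intervalIntegral_ite_le hab hxint hyint hxeq hyeq hxy, ?_⟩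
  · split_ifs with htb
    exacts [hxmem t ⟨ht.1, htb⟩, hymem t ⟨(not_le.1 htb).le, ht.2⟩]
  rw [ae_restrict_iff' measurableSet_Icc] at hxae hyae ⊢
  filter_upwards [hxae, hyae] with t hxt hyt ht
  split_ifs with htb
  exacts [hxt ⟨ht.1, htb⟩, hyt ⟨(not_le.1 htb).le, ht.2⟩]

end IsSweepingSol

section MinTime

variable {C : ℝ → Set E} {G : ℝ → E → Set E} {S : Set E}

theorem minTime_le_of_isSweepingSol {t₀ t₁ : ℝ} {x₀ : E} {x : ℝ → E} (h : t₀ ≤ t₁)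
    (hx : IsSweepingSol C G t₀ t₁ x) (hx₀ : x t₀ = x₀) (hxS : x t₁ ∈ S) :
    minTime C G S t₀ x₀ ≤ ENNReal.ofReal (t₁ - t₀) :=
  sInf_le ⟨t₁ - t₀, ⟨sub_nonneg.2 h, x, by rwa [add_sub_cancel], hx₀, by rwa [add_sub_cancel]⟩,
    rfl⟩

theorem minTime_le_add_minTime {t₀ s : ℝ} {x : ℝ → E} (hs : 0 ≤ s)
    (hx : IsSweepingSol C G t₀ (t₀ + s) x) :
    minTime C G S t₀ (x t₀) ≤ ENNReal.ofReal s + minTime C G S (t₀ + s) (x (t₀ + s)) := by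
  rw [← tsub_le_iff_left]
  refine le_sInf ?_
  rintro _ ⟨a, ⟨ha, y, hy, hy₀, hyS⟩, rfl⟩
  rw [tsub_le_iff_left, ← ENNReal.ofReal_add hs ha]
  have hend : (if t₀ + s + a ≤ t₀ + s then x (t₀ + s + a) else y (t₀ + s + a)) =
      y (t₀ + s + a) := by
    split_ifs with h
    · obtain rfl : a = 0 := by linarith
      rw [add_zero, hy₀]
    · rfl
  calc minTime C G S t₀ (x t₀)
      ≤ ENNReal.ofReal (t₀ + s + a - t₀) :=
        minTime_le_of_isSweepingSol (by linarith) (hx.concat (by linarith) hy hy₀.symm)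
          (if_pos (by linarith)) (by rwa [hend])
    _ = ENNReal.ofReal (s + a) := by ring_nf

end MinTime

theorem hypograph_strong_invariance_general {n : ℕ}
    (C : ℝ → Set (EuclideanSpace ℝ (Fin n)))
    (G : ℝ → EuclideanSpace ℝ (Fin n) → Set (EuclideanSpace ℝ (Fin n)))
    (S : Set (EuclideanSpace ℝ (Fin n))) :
    ∀ t₀ x₀, 0 ≤ t₀ → x₀ ∈ C t₀ →
      ∀ l₀ : ℝ, ENNReal.ofReal l₀ ≤ minTime C G S t₀ x₀ →
        ∀ τ > (0 : ℝ), ∀ x : ℝ → EuclideanSpace ℝ (Fin n),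
          IsSweepingSol C G t₀ (t₀ + τ) x → x t₀ = x₀ →
          ∀ s ∈ Icc (0 : ℝ) τ,
            ENNReal.ofReal (l₀ - s) ≤ minTime C G S (t₀ + s) (x (t₀ + s)) := by
  rintro t₀ _ - - l₀ hl₀ τ - x hx rfl s ⟨hs₀, hsτ⟩
  rw [ENNReal.ofReal_sub _ hs₀, tsub_le_iff_left]
  exact hl₀.trans (minTime_le_add_minTime hs₀ (hx.mono_right (by linarith)))

/-- if the minimum time function `T` is upper semicontinuous on the graph of `C`
and not identically `+∞`, then its hypograph is strongly invariant for the augmented dynamics: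
for every `(t₀,x₀)` on the graph, every `λ₀ ≤ T(t₀,x₀)`, every `τ > 0` and every solution `x`
on `[t₀, t₀+τ]` from `x₀`, one has `T(t₀+s, x(t₀+s)) ≥ λ₀ − s` on `[0,τ]`. -/
theorem hypograph_strong_invariance {n : ℕ} (r L_C M L_G : ℝ) (hr : 0 < r)
    (C : ℝ → Set (EuclideanSpace ℝ (Fin n)))
    (G : ℝ → EuclideanSpace ℝ (Fin n) → Set (EuclideanSpace ℝ (Fin n)))
    (hC : HypC r L_C C) (hG : HypG M L_G G)
    (S : Set (EuclideanSpace ℝ (Fin n))) (hS : IsClosed S)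
    (husc : UpperSemicontinuousOn
      (fun q : ℝ × EuclideanSpace ℝ (Fin n) => minTime C G S q.1 q.2) (graphSet C))
    (hnotinfty : ∃ t x, 0 ≤ t ∧ x ∈ C t ∧ minTime C G S t x ≠ ⊤) :
    ∀ t₀ x₀, 0 ≤ t₀ → x₀ ∈ C t₀ →
      ∀ l₀ : ℝ, ENNReal.ofReal l₀ ≤ minTime C G S t₀ x₀ →
        ∀ τ > (0 : ℝ), ∀ x : ℝ → EuclideanSpace ℝ (Fin n),
          IsSweepingSol C G t₀ (t₀ + τ) x → x t₀ = x₀ →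
          ∀ s ∈ Icc (0 : ℝ) τ,
            ENNReal.ofReal (l₀ - s) ≤ minTime C G S (t₀ + s) (x (t₀ + s)) :=
  hypograph_strong_invariance_general C G S
end

section
/- Assume Hypotheses (H_C) and (H_G), let S ⊆ ℝⁿ be closed with S ∩ C(t) ≠ ∅ for some t ≥ 0, and let θ : graph(C) → [0, +∞] be lower semicontinuous with θ(t,x) > 0 whenever x ∈ C(t)∖S and θ(t,x) = 0 whenever x ∈ C(t) ∩ S. Assume the epigraph of θ is weakly invariant for the augmented dynamics Γ(τ,x,λ) = {1} × (−N_{C(τ)}(x) + G(τ,x)) × {−1}, i.e.: for every (t₀,x₀) ∈ graph(C) and every real λ₀ ≥ θ(t₀,x₀) there exist τ > 0 and a solution x of the perturbed sweeping process on [t₀, t₀ + τ] with x(t₀) = x₀ and θ(t₀ + s, x(t₀ + s)) ≤ λ₀ − s for all s ∈ [0, τ). Then θ(t,x) ≥ T(t,x) for all (t,x) ∈ graph(C), where T is the minimum time function for the target S. -/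
open scoped Pointwise RealInnerProductSpace ENNReal
open Set Metric MeasureTheory

variable {E : Type*} [NormedAddCommGroup E] [InnerProductSpace ℝ E]

/-!
Fix `(t, x)` with `l₀ = θ t x < ∞` and order the trajectories of the augmented dynamics from
`(t, x, l₀)` that stay in the epigraph of `θ` by extension. A chain has an upper bound: the
proximal normal inequality against the Hausdorff-Lipschitz moving set bounds the speed of every
sweeping-process solution by `L_C + 2 M`, so the union of the chain extends to the supremum of
its lengths, and lower semicontinuity of `θ` keeps the endpoint in the epigraph. By Zorn's lemma
there is a maximal trajectory; weak invariance extends any trajectory of length `< l₀`, so the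
maximal one has length `l₀`. At its end `θ ≤ 0`, hence it has reached `S`, and `T(t, x) ≤ l₀`.
-/

open Filter Topology

section Primitive

variable {F : Type*} [NormedAddCommGroup F] [NormedSpace ℝ F]

theorem ae_restrict_Icc_mem_Ioo (a b : ℝ) : ∀ᵐ t ∂(volume.restrict (Icc a b)), t ∈ Ioo a b := by
  rw [← Measure.restrict_congr_set Ioo_ae_eq_Icc]
  exact ae_restrict_mem measurableSet_Ioo

theorem intervalIntegral_congr_of_ae_restrict_Icc {f g : ℝ → F} {a b s t : ℝ}
    (h : f =ᵐ[volume.restrict (Icc a b)] g) (hs : s ∈ Icc a b) (ht : t ∈ Icc a b) :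
    ∫ u in s..t, f u = ∫ u in s..t, g u :=
  intervalIntegral.integral_congr_ae <| ((ae_restrict_iff' measurableSet_Icc).1 h).mono
    fun _ hu hu' => hu (uIcc_subset_Icc hs ht (uIoc_subset_uIcc hu'))

theorem ae_hasDerivAt_of_eq_add_integral [CompleteSpace F] {x f : ℝ → F} {a b : ℝ}
    (hf : IntegrableOn f (Icc a b)) (hx : ∀ t ∈ Icc a b, x t = x a + ∫ s in a..t, f s) :
    ∀ᵐ t ∂(volume.restrict (Icc a b)), HasDerivAt x (f t) t := by
  rcases le_or_gt a b with hab | hab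
  · rw [← uIcc_of_le hab] at hf
    filter_upwards [ae_restrict_of_ae hf.intervalIntegrable.ae_hasDerivAt_integral,
      ae_restrict_Icc_mem_Ioo a b] with t hderiv ht
    have hmem : t ∈ uIcc a b := by rw [uIcc_of_le hab]; exact Ioo_subset_Icc_self ht
    refine ((hderiv hmem a left_mem_uIcc).const_add (x a)).congr_of_eventuallyEq ?_
    filter_upwards [Ioo_mem_nhds ht.1 ht.2] with u hu using hx u (Ioo_subset_Icc_self hu)
  · simp [Icc_eq_empty_of_lt hab]

end Primitive

theorem LowerSemicontinuousWithinAt.le_of_tendsto {α β ι : Type*} [TopologicalSpace α]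
    [LinearOrder β] [TopologicalSpace β] [OrderTopology β] [DenselyOrdered β]
    {f : α → β} {s : Set α} {p : α} (hf : LowerSemicontinuousWithinAt f s p)
    {l : Filter ι} [l.NeBot] {γ : ι → α} {g : ι → β} {c : β}
    (hγ : Tendsto γ l (𝓝[s] p)) (hg : Tendsto g l (𝓝 c)) (hle : ∀ᶠ i in l, f (γ i) ≤ g i) :
    f p ≤ c := by
  by_contra! hc
  obtain ⟨d, hcd, hdf⟩ := exists_between hc
  obtain ⟨i, hdi, hgi, hfg⟩ :=
    ((hγ.eventually (hf d hdf)).and ((hg.eventually (gt_mem_nhds hcd)).and hle)).exists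
  exact lt_irrefl d ((hdi.trans_le hfg).trans hgi)

theorem neg_mul_norm_le_inner_of_hasDerivWithinAt {K : Set E} {x : ℝ → E} {t L : ℝ} {v ζ : E}
    (hx : HasDerivWithinAt x v (Iio t) t) (hζ : ζ ∈ proxNormalCone K (x t))
    (hnear : ∀ᶠ s in 𝓝[<] t, ∃ y ∈ K, ‖x s - y‖ ≤ L * (t - s)) :
    -(L * ‖ζ‖) ≤ ⟪ζ, v⟫ := by
  obtain ⟨-, σ, hσ, hprox⟩ := hζ
  have hslope : Tendsto (slope x t) (𝓝[<] t) (𝓝 v) :=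
    (hasDerivWithinAt_iff_tendsto_slope' (by simp : t ∉ Iio t)).1 hx
  have hbound : Tendsto (fun s => -(σ * (t - s) * (L + ‖slope x t s‖) ^ 2) - L * ‖ζ‖) (𝓝[<] t)
      (𝓝 (-(σ * (t - t) * (L + ‖v‖) ^ 2) - L * ‖ζ‖)) := by
    have hlin : Tendsto (fun s => t - s) (𝓝[<] t) (𝓝 (t - t)) :=
      (tendsto_const_nhds.sub tendsto_id).mono_left nhdsWithin_le_nhds
    exact (((hlin.const_mul σ).mul ((tendsto_const_nhds.add hslope.norm).pow 2)).neg).sub_const _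
  rw [sub_self, mul_zero, zero_mul, neg_zero, zero_sub] at hbound
  refine le_of_tendsto_of_tendsto hbound (tendsto_const_nhds.inner hslope) ?_
  filter_upwards [hnear, self_mem_nhdsWithin] with s ⟨y, hyK, hy⟩ (hs : s < t)
  have hts : 0 < t - s := sub_pos.2 hs
  have hdiff : x s - x t = (s - t) • slope x t s := by
    rw [slope_def_module, smul_smul, mul_inv_cancel₀ (sub_neg.2 hs).ne, one_smul]
  have hnorm : ‖x s - x t‖ = (t - s) * ‖slope x t s‖ := by
    rw [hdiff, norm_smul, Real.norm_eq_abs, abs_of_neg (sub_neg.2 hs), neg_sub]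
  have hyx : ‖y - x t‖ ≤ (t - s) * (L + ‖slope x t s‖) := by
    calc ‖y - x t‖ ≤ ‖x s - y‖ + ‖x s - x t‖ := by
          rw [← norm_neg (x s - y), neg_sub]; exact norm_sub_le_norm_sub_add_norm_sub _ _ _
      _ ≤ (t - s) * (L + ‖slope x t s‖) := by rw [hnorm]; linarith
  have hineq : (s - t) * ⟪ζ, slope x t s⟫ ≤
      σ * ((t - s) * (L + ‖slope x t s‖)) ^ 2 + ‖ζ‖ * (L * (t - s)) := by
    calc (s - t) * ⟪ζ, slope x t s⟫ = ⟪ζ, y - x t⟫ + ⟪ζ, x s - y⟫ := by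
          rw [← inner_smul_right, ← hdiff, ← inner_add_right, sub_add_sub_cancel']
      _ ≤ σ * ‖y - x t‖ ^ 2 + ‖ζ‖ * ‖x s - y‖ :=
          add_le_add (hprox y hyK) (real_inner_le_norm _ _)
      _ ≤ σ * ((t - s) * (L + ‖slope x t s‖)) ^ 2 + ‖ζ‖ * (L * (t - s)) := by
          gcongr
  nlinarith

theorem norm_le_of_mem_neg_proxNormalCone_add {K Γ : Set E} {p v : E} {L M : ℝ} (hL : 0 ≤ L)
    (hΓ : ∀ g ∈ Γ, ‖g‖ ≤ M) (hv : v ∈ -proxNormalCone K p + Γ)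
    (hinner : ∀ ζ ∈ proxNormalCone K p, -(L * ‖ζ‖) ≤ ⟪ζ, v⟫) : ‖v‖ ≤ L + 2 * M := by
  obtain ⟨u, hu, g, hg, rfl⟩ := hv
  have hgM := hΓ g hg
  have hζ := hinner (-u) hu
  rw [norm_neg, inner_neg_left, inner_add_right, real_inner_self_eq_norm_sq] at hζ
  have hug : ⟪u, g⟫ ≥ -(‖u‖ * M) := by
    nlinarith [neg_le_of_abs_le (abs_real_inner_le_norm u g), norm_nonneg u]
  have hu_le : ‖u‖ ≤ L + M := by nlinarith [norm_nonneg u, norm_nonneg g]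
  linarith [norm_add_le u g]

section HypC

variable {r L_C : ℝ} {C : ℝ → Set E}

theorem HypC.lipschitz_nonneg (hC : HypC r L_C C) : 0 ≤ L_C := by
  have h := hC.lipschitz 0 1 le_rfl zero_le_one
  norm_num at h
  exact hausdorffDist_nonneg.trans h

theorem HypC.exists_dist_le (hC : HypC r L_C C) {s t : ℝ} {x : E} (hs : 0 ≤ s) (ht : 0 ≤ t)
    (hx : x ∈ C s) : ∃ y ∈ C t, dist x y ≤ L_C * |s - t| := by
  obtain ⟨y, hy, hxy⟩ := (hC.isCompact t ht).exists_infDist_eq_dist (hC.nonempty t ht) x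
  have hfin := hausdorffEDist_ne_top_of_nonempty_of_bounded (hC.nonempty s hs) (hC.nonempty t ht)
    (hC.isCompact s hs).isBounded (hC.isCompact t ht).isBounded
  exact ⟨y, hy, hxy ▸ (infDist_le_hausdorffDist_of_mem hx hfin).trans (hC.lipschitz s t hs ht)⟩

theorem HypC.isClosed_graphSet (hC : HypC r L_C C) : IsClosed (graphSet C) := by
  refine isClosed_of_closure_subset fun q hq => ?_
  obtain ⟨p, hpC, hpq⟩ := mem_closure_iff_seq_limit.1 hq
  have h1 : Tendsto (fun k => (p k).1) atTop (𝓝 q.1) := (continuous_fst.tendsto q).comp hpq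
  have h2 : Tendsto (fun k => (p k).2) atTop (𝓝 q.2) := (continuous_snd.tendsto q).comp hpq
  have hq0 : 0 ≤ q.1 := ge_of_tendsto' h1 fun k => (hpC k).1
  choose y hyC hy using fun k => hC.exists_dist_le (hpC k).1 hq0 (hpC k).2
  have hdist : Tendsto (fun k => L_C * |(p k).1 - q.1| + dist (p k).2 q.2) atTop (𝓝 0) := by
    have := ((h1.sub_const q.1).abs.const_mul L_C).add (tendsto_iff_dist_tendsto_zero.1 h2)
    simpa using this
  refine ⟨hq0, (hC.isCompact _ hq0).isClosed.mem_of_tendsto (b := atTop) (f := y) ?_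
    (Eventually.of_forall hyC)⟩
  refine tendsto_iff_dist_tendsto_zero.2 (squeeze_zero (fun _ => dist_nonneg) (fun k => ?_) hdist)
  calc dist (y k) q.2 ≤ dist (y k) (p k).2 + dist (p k).2 q.2 := dist_triangle _ _ _
    _ ≤ L_C * |(p k).1 - q.1| + dist (p k).2 q.2 := by rw [dist_comm]; gcongr; exact hy k

end HypC

section SweepingProcess

variable {C : ℝ → Set E} {G : ℝ → E → Set E} {a b c : ℝ} {x y : ℝ → E}

theorem IsSweepingSol.congr (h : IsSweepingSol C G a b x) (hxy : EqOn x y (Icc a b)) :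
    IsSweepingSol C G a b y := by
  obtain ⟨hmem, x', hint, hid, hincl⟩ := h
  refine ⟨fun t ht => hxy ht ▸ hmem t ht, x', hint, fun t ht => ?_, ?_⟩
  · rw [← hxy ht, ← hxy ⟨le_rfl, ht.1.trans ht.2⟩]
    exact hid t ht
  · filter_upwards [hincl, ae_restrict_mem measurableSet_Icc] with t h ht
    rwa [← hxy ht]

theorem IsSweepingSol.mono_right_s10 (h : IsSweepingSol C G a b x) (hcb : c ≤ b) :
    IsSweepingSol C G a c x := by
  obtain ⟨hmem, x', hint, hid, hincl⟩ := h
  have hsub : Icc a c ⊆ Icc a b := Icc_subset_Icc_right hcb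
  exact ⟨fun t ht => hmem t (hsub ht), x', hint.mono_set hsub, fun t ht => hid t (hsub ht),
    ae_restrict_of_ae_restrict_of_subset hsub hincl⟩

theorem isSweepingSol_const {x₀ : E} (hx₀ : x₀ ∈ C a) : IsSweepingSol C G a a fun _ => x₀ := by
  refine ⟨fun t ht => ?_, 0, integrableOn_zero, fun t _ => by simp, ?_⟩
  · rw [Icc_self, mem_singleton_iff] at ht
    rwa [ht]
  · simp

theorem IsSweepingSol.continuousOn [CompleteSpace E] (h : IsSweepingSol C G a b x) :
    ContinuousOn x (Icc a b) := by
  obtain ⟨-, x', hint, hid, -⟩ := h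
  rcases le_or_gt a b with hab | hab
  · rw [← uIcc_of_le hab] at hint hid ⊢
    exact (continuousOn_const.add (intervalIntegral.continuousOn_primitive_interval hint)).congr
      hid
  · simp [Icc_eq_empty_of_lt hab]

theorem isSweepingSol_iff_deriv [CompleteSpace E] :
    IsSweepingSol C G a b x ↔ (∀ t ∈ Icc a b, x t ∈ C t) ∧ IntegrableOn (deriv x) (Icc a b) ∧
      (∀ t ∈ Icc a b, x t = x a + ∫ s in a..t, deriv x s) ∧
      ∀ᵐ t ∂(volume.restrict (Icc a b)), deriv x t ∈ -proxNormalCone (C t) (x t) + G t (x t) := by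
  refine ⟨fun ⟨hmem, x', hint, hid, hincl⟩ => ?_, fun ⟨hmem, hint, hid, hincl⟩ =>
    ⟨hmem, deriv x, hint, hid, hincl⟩⟩
  have hd : deriv x =ᵐ[volume.restrict (Icc a b)] x' :=
    (ae_hasDerivAt_of_eq_add_integral hint hid).mono fun _ ht => ht.deriv
  refine ⟨hmem, hint.congr_fun_ae hd.symm, fun t ht => ?_, ?_⟩
  · rw [hid t ht, intervalIntegral_congr_of_ae_restrict_Icc hd ⟨le_rfl, ht.1.trans ht.2⟩ ht]
  · filter_upwards [hincl, hd] with t h1 h2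
    rwa [h2]

theorem IsSweepingSol.glue [CompleteSpace E] (hab : a ≤ b) (hbc : b ≤ c)
    (hx : IsSweepingSol C G a b x) (hy : IsSweepingSol C G b c y) (hxy : y b = x b) :
    IsSweepingSol C G a c fun t => if t ≤ b then x t else y t := by
  set z : ℝ → E := fun t => if t ≤ b then x t else y t
  obtain ⟨hxC, hxi, hxid, hxF⟩ := isSweepingSol_iff_deriv.1 hx
  obtain ⟨hyC, hyi, hyid, hyF⟩ := isSweepingSol_iff_deriv.1 hy
  have hzx : EqOn z x (Icc a b) := fun t ht => if_pos ht.2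
  have hzy : EqOn z y (Icc b c) := fun t ht => by
    rcases ht.1.eq_or_lt with rfl | hbt
    · simp [z, hxy]
    · simp [z, not_le.2 hbt]
  have hdx : deriv z =ᵐ[volume.restrict (Icc a b)] deriv x := by
    filter_upwards [ae_restrict_Icc_mem_Ioo a b] with t ht
    exact EventuallyEq.deriv_eq (eventually_of_mem (Iio_mem_nhds ht.2) fun u hu => if_pos hu.le)
  have hdy : deriv z =ᵐ[volume.restrict (Icc b c)] deriv y := by
    filter_upwards [ae_restrict_Icc_mem_Ioo b c] with t ht
    exact EventuallyEq.deriv_eq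
      (eventually_of_mem (Ioi_mem_nhds ht.1) fun u hu => if_neg (not_le.2 hu))
  have hunion : Icc a c = Icc a b ∪ Icc b c := (Icc_union_Icc_eq_Icc hab hbc).symm
  have hzi : IntegrableOn (deriv z) (Icc a c) :=
    hunion ▸ (hxi.congr_fun_ae hdx.symm).union (hyi.congr_fun_ae hdy.symm)
  have hab' : a ∈ Icc a b := ⟨le_rfl, hab⟩
  have hb : b ∈ Icc a b := ⟨hab, le_rfl⟩
  refine ⟨fun t ht => ?_, deriv z, hzi, fun t ht => ?_, ?_⟩
  · rcases le_or_gt t b with htb | hbt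
    · exact hzx ⟨ht.1, htb⟩ ▸ hxC t ⟨ht.1, htb⟩
    · exact hzy ⟨hbt.le, ht.2⟩ ▸ hyC t ⟨hbt.le, ht.2⟩
  · rcases le_or_gt t b with htb | hbt
    · rw [hzx ⟨ht.1, htb⟩, hzx hab', hxid t ⟨ht.1, htb⟩,
        intervalIntegral_congr_of_ae_restrict_Icc hdx hab' ⟨ht.1, htb⟩]
    · have hint : ∀ s ∈ Icc a c, IntervalIntegrable (deriv z) volume b s := fun s hs =>
        (hzi.mono_set (uIcc_subset_Icc ⟨hab, hbc⟩ hs)).intervalIntegrable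
      rw [hzy ⟨hbt.le, ht.2⟩, hzx hab', hyid t ⟨hbt.le, ht.2⟩, hxy, hxid b hb,
        ← intervalIntegral.integral_add_adjacent_intervals ((hint a ⟨le_rfl, hab.trans hbc⟩).symm)
          (hint t ht), add_assoc,
        intervalIntegral_congr_of_ae_restrict_Icc hdx hab' hb,
        intervalIntegral_congr_of_ae_restrict_Icc hdy ⟨le_rfl, hbc⟩ ⟨hbt.le, ht.2⟩]
  · refine ae_mono (hunion ▸ Measure.restrict_union_le _ _) (ae_add_measure_iff.2 ⟨?_, ?_⟩)
    · filter_upwards [hxF, hdx, ae_restrict_mem measurableSet_Icc] with t h hd ht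
      rwa [hd, hzx ht]
    · filter_upwards [hyF, hdy, ae_restrict_mem measurableSet_Icc] with t h hd ht
      rwa [hd, hzy ht]

end SweepingProcess

section Extension

variable [CompleteSpace E] {r L_C M L_G : ℝ} {C : ℝ → Set E} {G : ℝ → E → Set E} {a b : ℝ}
  {x : ℝ → E}

theorem IsSweepingSol.ae_norm_deriv_le (hC : HypC r L_C C) (hG : HypG M L_G G) (ha : 0 ≤ a)
    (h : IsSweepingSol C G a b x) :
    ∀ᵐ t ∂(volume.restrict (Icc a b)), ‖deriv x t‖ ≤ L_C + 2 * M := by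
  obtain ⟨hmem, hint, hid, hincl⟩ := isSweepingSol_iff_deriv.1 h
  filter_upwards [ae_hasDerivAt_of_eq_add_integral hint hid, hincl, ae_restrict_Icc_mem_Ioo a b]
    with t hd hv ht
  refine norm_le_of_mem_neg_proxNormalCone_add hC.lipschitz_nonneg (hG.bounded t (x t)) hv
    fun ζ hζ => neg_mul_norm_le_inner_of_hasDerivWithinAt hd.hasDerivWithinAt hζ ?_
  filter_upwards [Ioo_mem_nhdsLT ht.1] with s hs
  obtain ⟨y, hy, hxy⟩ := hC.exists_dist_le (ha.trans hs.1.le) (ha.trans ht.1.le)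
    (hmem s ⟨hs.1.le, hs.2.le.trans ht.2.le⟩)
  rw [dist_eq_norm, abs_of_neg (sub_neg.2 hs.2), neg_sub] at hxy
  exact ⟨y, hy, hxy⟩

/-- The uniform speed bound `L_C + 2 M` makes the velocity integrable up to `b`, so the
endpoint value is the limit of the primitive, and it lies in `C b` because the graph is closed. -/
theorem exists_isSweepingSol_of_forall_lt (hC : HypC r L_C C) (hG : HypG M L_G G) (ha : 0 ≤ a)
    (hab : a < b) (h : ∀ c ∈ Ico a b, IsSweepingSol C G a c x) :
    ∃ y, IsSweepingSol C G a b y ∧ EqOn y x (Ico a b) := by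
  obtain ⟨u, -, hu, hub⟩ := exists_seq_strictMono_tendsto' hab
  have hcover : Ico a b ⊆ ⋃ k, Icc a (u k) := fun t ht => by
    obtain ⟨k, hk⟩ := (hub.eventually (eventually_gt_nhds ht.2)).exists
    exact mem_iUnion.2 ⟨k, ht.1, hk.le⟩
  have hae : ∀ {P : ℝ → Prop}, (∀ c ∈ Ico a b, ∀ᵐ t ∂(volume.restrict (Icc a c)), P t) →
      ∀ᵐ t ∂(volume.restrict (Icc a b)), P t := fun hP => by
    rw [← Measure.restrict_congr_set Ico_ae_eq_Icc]
    exact ae_restrict_of_ae_restrict_of_subset hcover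
      ((ae_restrict_iUnion_iff _ _).2 fun k => hP _ ⟨(hu k).1.le, (hu k).2⟩)
  have hsol := fun c hc => isSweepingSol_iff_deriv.1 (h c hc)
  have hint : IntegrableOn (deriv x) (Icc a b) :=
    Measure.integrableOn_of_bounded measure_Icc_lt_top.ne (aestronglyMeasurable_deriv x _)
      (hae fun c hc => (h c hc).ae_norm_deriv_le hC hG ha)
  have hid : ∀ t ∈ Ico a b, x t = x a + ∫ s in a..t, deriv x s := fun t ht =>
    (hsol t ht).2.2.1 t ⟨ht.1, le_rfl⟩
  set z := x a + ∫ s in a..b, deriv x s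
  have hz : Tendsto x (𝓝[<] b) (𝓝 z) := by
    rw [← uIcc_of_le hab.le] at hint
    have hprim := (intervalIntegral.continuousOn_primitive_interval hint b
      right_mem_uIcc).mono_of_mem_nhdsWithin (by rw [uIcc_of_le hab.le]; exact Icc_mem_nhdsLT hab)
    refine (tendsto_const_nhds.add hprim).congr' ?_
    filter_upwards [Ico_mem_nhdsLT hab] with t ht using (hid t ht).symm
  have hzC : z ∈ C b := by
    refine (hC.isClosed_graphSet.mem_of_tendsto (b := 𝓝[<] b) (f := fun t => (t, x t))
      (tendsto_nhdsWithin_of_tendsto_nhds tendsto_id |>.prodMk_nhds hz) ?_).2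
    filter_upwards [Ico_mem_nhdsLT hab] with t ht using
      ⟨ha.trans ht.1, (h t ht).1 t ⟨ht.1, le_rfl⟩⟩
  refine ⟨Function.update x b z, ⟨fun t ht => ?_, deriv x, hint, fun t ht => ?_, ?_⟩,
    fun t ht => Function.update_of_ne ht.2.ne _ _⟩
  · rcases ht.2.lt_or_eq with htb | rfl
    · rw [Function.update_of_ne htb.ne]
      exact (h t ⟨ht.1, htb⟩).1 t ⟨ht.1, le_rfl⟩
    · simpa using hzC
  · rw [Function.update_of_ne hab.ne]
    rcases ht.2.lt_or_eq with htb | rfl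
    · rw [Function.update_of_ne htb.ne]
      exact hid t ⟨ht.1, htb⟩
    · simp [z]
  · refine hae fun c hc => ?_
    filter_upwards [(hsol c hc).2.2.2, ae_restrict_mem measurableSet_Icc] with t h ht
    rwa [Function.update_of_ne (ht.2.trans_lt hc.2).ne]

end Extension

/-- Weak invariance of the epigraph of `θ` under the augmented dynamics
`{1} × (-N_{C(τ)}(x) + G(τ, x)) × {-1}`. -/
def EpigraphWeaklyInvariant (C : ℝ → Set E) (G : ℝ → E → Set E) (θ : ℝ → E → ℝ≥0∞) : Prop :=
  ∀ t₀ x₀, 0 ≤ t₀ → x₀ ∈ C t₀ → ∀ l₀ : ℝ, θ t₀ x₀ ≤ ENNReal.ofReal l₀ →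
    ∃ τ > (0 : ℝ), ∃ x : ℝ → E, IsSweepingSol C G t₀ (t₀ + τ) x ∧ x t₀ = x₀ ∧
      ∀ s ∈ Ico (0 : ℝ) τ, θ (t₀ + s) (x (t₀ + s)) ≤ ENNReal.ofReal (l₀ - s)

/-- A trajectory `s ↦ (t₀ + s, path (t₀ + s), l₀ - s)`, `s ∈ [0, len]`, of the augmented
dynamics that stays in the epigraph of `θ`. -/
structure DescentArc (C : ℝ → Set E) (G : ℝ → E → Set E) (θ : ℝ → E → ℝ≥0∞) (t₀ : ℝ) (x₀ : E)
    (l₀ : ℝ) where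
  len : ℝ
  path : ℝ → E
  len_nonneg : 0 ≤ len
  len_le : len ≤ l₀
  isSweepingSol : IsSweepingSol C G t₀ (t₀ + len) path
  path_start : path t₀ = x₀
  le_sub : ∀ s ∈ Icc 0 len, θ (t₀ + s) (path (t₀ + s)) ≤ ENNReal.ofReal (l₀ - s)

namespace DescentArc

variable {C : ℝ → Set E} {G : ℝ → E → Set E} {θ : ℝ → E → ℝ≥0∞} {t₀ : ℝ} {x₀ : E} {l₀ : ℝ}

instance : Preorder (DescentArc C G θ t₀ x₀ l₀) where
  le p q := p.len ≤ q.len ∧ EqOn q.path p.path (Icc t₀ (t₀ + p.len))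
  le_refl _ := ⟨le_rfl, fun _ _ => rfl⟩
  le_trans _ _ _ hpq hqr :=
    ⟨hpq.1.trans hqr.1, fun _ hu => (hqr.2 ⟨hu.1, hu.2.trans (by linarith [hpq.1])⟩).trans
      (hpq.2 hu)⟩

theorem le_of_len_le {c : Set (DescentArc C G θ t₀ x₀ l₀)} (hc : IsChain (· ≤ ·) c)
    {p q : DescentArc C G θ t₀ x₀ l₀} (hp : p ∈ c) (hq : q ∈ c) (h : q.len ≤ p.len) : q ≤ p := by
  rcases hc.total hq hp with hqp | hpq
  · exact hqp
  · exact ⟨h, fun u hu => (hpq.2 ⟨hu.1, hu.2.trans (by linarith [hpq.1])⟩).symm⟩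

theorem exists_eqOn_of_isChain {c : Set (DescentArc C G θ t₀ x₀ l₀)} (hc : IsChain (· ≤ ·) c) :
    ∃ x : ℝ → E, ∀ p ∈ c, EqOn x p.path (Icc t₀ (t₀ + p.len)) := by
  classical
  refine ⟨fun u => if h : ∃ p ∈ c, u ≤ t₀ + p.len then h.choose.path u else x₀,
    fun p hp u hu => ?_⟩
  have h : ∃ q ∈ c, u ≤ t₀ + q.len := ⟨p, hp, hu.2⟩
  obtain ⟨hq, hqu⟩ := h.choose_spec
  simp only [dif_pos h]
  rcases le_total h.choose.len p.len with hqp | hpq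
  · exact ((le_of_len_le hc hp hq hqp).2 ⟨hu.1, hqu⟩).symm
  · exact (le_of_len_le hc hq hp hpq).2 hu

def const (hx₀ : x₀ ∈ C t₀) (hθ : θ t₀ x₀ ≤ ENNReal.ofReal l₀) (hl₀ : 0 ≤ l₀) :
    DescentArc C G θ t₀ x₀ l₀ where
  len := 0
  path := fun _ => x₀
  len_nonneg := le_rfl
  len_le := hl₀
  isSweepingSol := by simpa using isSweepingSol_const hx₀
  path_start := rfl
  le_sub s hs := by
    obtain rfl : s = 0 := le_antisymm hs.2 hs.1
    simpa using hθ

theorem le_sub_of_forall_lt [CompleteSpace E]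
    (hθ : LowerSemicontinuousOn (fun q : ℝ × E => θ q.1 q.2) (graphSet C)) (ht₀ : 0 ≤ t₀)
    {T : ℝ} (hT : 0 < T) {y : ℝ → E} (hy : IsSweepingSol C G t₀ (t₀ + T) y)
    (hle : ∀ s ∈ Ico 0 T, θ (t₀ + s) (y (t₀ + s)) ≤ ENNReal.ofReal (l₀ - s)) :
    θ (t₀ + T) (y (t₀ + T)) ≤ ENNReal.ofReal (l₀ - T) := by
  have hlt : t₀ < t₀ + T := by linarith
  have hgraph : ∀ u ∈ Icc t₀ (t₀ + T), (u, y u) ∈ graphSet C := fun u hu =>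
    ⟨ht₀.trans hu.1, hy.1 u hu⟩
  have hcont : Tendsto y (𝓝[<] (t₀ + T)) (𝓝 (y (t₀ + T))) :=
    (hy.continuousOn _ ⟨hlt.le, le_rfl⟩).mono_of_mem_nhdsWithin (Icc_mem_nhdsLT hlt)
  have key := LowerSemicontinuousWithinAt.le_of_tendsto (hθ _ (hgraph _ ⟨hlt.le, le_rfl⟩))
    (l := 𝓝[<] (t₀ + T)) (γ := fun u => (u, y u)) (g := fun u => ENNReal.ofReal (l₀ - (u - t₀)))
    (tendsto_nhdsWithin_iff.2 ⟨(tendsto_nhdsWithin_of_tendsto_nhds tendsto_id).prodMk_nhds hcont,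
      eventually_of_mem (Ico_mem_nhdsLT hlt) fun u hu => hgraph u ⟨hu.1, hu.2.le⟩⟩)
    (((ENNReal.continuous_ofReal.comp (continuous_const.sub (continuous_id.sub
      continuous_const))).tendsto _).mono_left nhdsWithin_le_nhds)
    (eventually_of_mem (Ico_mem_nhdsLT hlt) fun u hu => by
      simpa using hle (u - t₀) ⟨sub_nonneg.2 hu.1, by linarith [hu.2]⟩)
  simpa using key

theorem bddAbove_of_isChain [CompleteSpace E] {r L_C M L_G : ℝ} (hC : HypC r L_C C)
    (hG : HypG M L_G G) (hθ : LowerSemicontinuousOn (fun q : ℝ × E => θ q.1 q.2) (graphSet C))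
    (ht₀ : 0 ≤ t₀) {c : Set (DescentArc C G θ t₀ x₀ l₀)} (hc : IsChain (· ≤ ·) c)
    (hne : c.Nonempty) : BddAbove c := by
  set T := sSup (len '' c)
  have hbdd : BddAbove (len '' c) := ⟨l₀, by rintro _ ⟨p, -, rfl⟩; exact p.len_le⟩
  have hle : ∀ p ∈ c, p.len ≤ T := fun p hp => le_csSup hbdd (mem_image_of_mem _ hp)
  have hTl₀ : T ≤ l₀ := csSup_le (hne.image len) (by rintro _ ⟨p, -, rfl⟩; exact p.len_le)
  by_cases hmax : ∃ p ∈ c, p.len = T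
  · obtain ⟨p, hp, hpT⟩ := hmax
    exact ⟨p, fun q hq => le_of_len_le hc hp hq (hpT ▸ hle q hq)⟩
  push Not at hmax
  have hlt : ∀ p ∈ c, p.len < T := fun p hp => (hle p hp).lt_of_ne (hmax p hp)
  have hexists : ∀ u < t₀ + T, ∃ p ∈ c, u < t₀ + p.len := fun u hu => by
    obtain ⟨_, ⟨p, hp, rfl⟩, hup⟩ := exists_lt_of_lt_csSup (hne.image len) (sub_lt_iff_lt_add'.2 hu)
    exact ⟨p, hp, by linarith⟩
  obtain ⟨x, hx⟩ := exists_eqOn_of_isChain hc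
  obtain ⟨p₀, hp₀⟩ := hne
  have hT : 0 < T := p₀.len_nonneg.trans_lt (hlt p₀ hp₀)
  obtain ⟨y, hy, hyx⟩ := exists_isSweepingSol_of_forall_lt hC hG ht₀ (show t₀ < t₀ + T by linarith)
    fun u hu => by
      obtain ⟨p, hp, hpu⟩ := hexists u hu.2
      exact (p.isSweepingSol.mono_right_s10 hpu.le).congr fun v hv =>
        (hx p hp ⟨hv.1, hv.2.trans hpu.le⟩).symm
  have hyp : ∀ p ∈ c, EqOn y p.path (Icc t₀ (t₀ + p.len)) := fun p hp u hu =>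
    (hyx ⟨hu.1, hu.2.trans_lt (by linarith [hlt p hp])⟩).trans (hx p hp hu)
  have hθy : ∀ s ∈ Ico 0 T, θ (t₀ + s) (y (t₀ + s)) ≤ ENNReal.ofReal (l₀ - s) := fun s hs => by
    obtain ⟨p, hp, hps⟩ := hexists (t₀ + s) (by linarith [hs.2])
    rw [hyp p hp ⟨by linarith [hs.1], hps.le⟩]
    exact p.le_sub s ⟨hs.1, by linarith⟩
  refine ⟨⟨T, y, hT.le, hTl₀, hy, ?_, fun s hs => ?_⟩, fun p hp => ⟨hle p hp, hyp p hp⟩⟩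
  · rw [hyp p₀ hp₀ ⟨le_rfl, by linarith [p₀.len_nonneg]⟩, p₀.path_start]
  · rcases hs.2.lt_or_eq with hsT | rfl
    · exact hθy s ⟨hs.1, hsT⟩
    · exact le_sub_of_forall_lt hθ ht₀ hT hy hθy

theorem exists_gt [CompleteSpace E] (hinv : EpigraphWeaklyInvariant C G θ) (ht₀ : 0 ≤ t₀)
    (p : DescentArc C G θ t₀ x₀ l₀) (hp : p.len < l₀) : ∃ q, p < q := by
  have hlen := p.len_nonneg
  obtain ⟨τ, hτ, y, hy, hy₀, hyθ⟩ := hinv (t₀ + p.len) (p.path (t₀ + p.len)) (by linarith)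
    (p.isSweepingSol.1 _ ⟨by linarith, le_rfl⟩) (l₀ - p.len)
    (by simpa using p.le_sub p.len ⟨hlen, le_rfl⟩)
  set δ := min (τ / 2) (l₀ - p.len)
  have hδ : 0 < δ := lt_min (half_pos hτ) (sub_pos.2 hp)
  have hδτ : δ < τ := (min_le_left _ _).trans_lt (half_lt_self hτ)
  let q : DescentArc C G θ t₀ x₀ l₀ :=
    { len := p.len + δ
      path := fun u => if u ≤ t₀ + p.len then p.path u else y u
      len_nonneg := by linarith
      len_le := by linarith [min_le_right (τ / 2) (l₀ - p.len)]
      isSweepingSol := by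
        rw [← add_assoc]
        exact p.isSweepingSol.glue (by linarith) (by linarith) (hy.mono_right_s10 (by linarith)) hy₀
      path_start := by simp [hlen, p.path_start]
      le_sub := fun s hs => by
        rcases le_or_gt s p.len with hsp | hps
        · simpa [hsp] using p.le_sub s ⟨hs.1, hsp⟩
        · have h := hyθ (s - p.len) ⟨by linarith, by linarith [hs.2]⟩
          rw [add_assoc, add_sub_cancel, sub_sub, add_sub_cancel] at h
          simpa [not_le.2 hps] using h }
  exact ⟨q, lt_of_le_not_ge ⟨by simp [q, hδ.le], fun u hu => if_pos hu.2⟩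
    fun h => by linarith [h.1, show q.len = p.len + δ from rfl]⟩

theorem minTime_le {S : Set E} (hθpos : ∀ t x, 0 ≤ t → x ∈ C t → x ∉ S → 0 < θ t x)
    (ht₀ : 0 ≤ t₀) (p : DescentArc C G θ t₀ x₀ l₀) (hp : p.len = l₀) :
    minTime C G S t₀ x₀ ≤ ENNReal.ofReal l₀ := by
  have hl₀ : 0 ≤ l₀ := hp ▸ p.len_nonneg
  have hsol := p.isSweepingSol
  rw [hp] at hsol
  have hS : p.path (t₀ + l₀) ∈ S := by
    by_contra hS
    have hθ0 := p.le_sub l₀ ⟨hl₀, hp.ge⟩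
    rw [sub_self, ENNReal.ofReal_zero, nonpos_iff_eq_zero] at hθ0
    exact (hθpos _ _ (by linarith) (hsol.1 _ ⟨by linarith, le_rfl⟩) hS).ne' hθ0
  exact sInf_le ⟨l₀, ⟨hl₀, p.path, hsol, p.path_start, hS⟩, rfl⟩

end DescentArc

theorem comparison_epigraph_weakly_invariant_general {n : ℕ} (r L_C M L_G : ℝ)
    (C : ℝ → Set (EuclideanSpace ℝ (Fin n)))
    (G : ℝ → EuclideanSpace ℝ (Fin n) → Set (EuclideanSpace ℝ (Fin n)))
    (hC : HypC r L_C C) (hG : HypG M L_G G)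
    (S : Set (EuclideanSpace ℝ (Fin n)))
    (θ : ℝ → EuclideanSpace ℝ (Fin n) → ℝ≥0∞)
    (hθlsc : LowerSemicontinuousOn
      (fun q : ℝ × EuclideanSpace ℝ (Fin n) => θ q.1 q.2) (graphSet C))
    (hθpos : ∀ t x, 0 ≤ t → x ∈ C t → x ∉ S → 0 < θ t x)
    (hinv : ∀ t₀ x₀, 0 ≤ t₀ → x₀ ∈ C t₀ → ∀ l₀ : ℝ, θ t₀ x₀ ≤ ENNReal.ofReal l₀ →
      ∃ τ > (0 : ℝ), ∃ x : ℝ → EuclideanSpace ℝ (Fin n),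
        IsSweepingSol C G t₀ (t₀ + τ) x ∧ x t₀ = x₀ ∧
        ∀ s ∈ Ico (0 : ℝ) τ, θ (t₀ + s) (x (t₀ + s)) ≤ ENNReal.ofReal (l₀ - s)) :
    ∀ t x, 0 ≤ t → x ∈ C t → minTime C G S t x ≤ θ t x := by
  intro t x ht hx
  rcases eq_or_ne (θ t x) ⊤ with htop | htop
  · simp [htop]
  set l₀ := (θ t x).toReal
  have hθ : θ t x = ENNReal.ofReal l₀ := (ENNReal.ofReal_toReal htop).symm
  have : Nonempty (DescentArc C G θ t x l₀) :=
    ⟨DescentArc.const hx hθ.le ENNReal.toReal_nonneg⟩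
  obtain ⟨m, hm⟩ := zorn_le_nonempty (α := DescentArc C G θ t x l₀) fun _ hc hne =>
    DescentArc.bddAbove_of_isChain hC hG hθlsc ht hc hne
  have hlen : m.len = l₀ := by
    by_contra hne
    obtain ⟨q, hq⟩ := m.exists_gt hinv ht (m.len_le.lt_of_ne hne)
    exact hm.not_lt hq
  exact hθ ▸ m.minTime_le hθpos ht hlen

/-- comparison principle (lower bound side). If `θ : graph(C) → [0,∞]` is lsc,
positive outside the target, zero on the target, and its epigraph is weakly invariant for the
augmented dynamics, then `θ ≥ T` on the graph of `C`. -/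
theorem comparison_epigraph_weakly_invariant {n : ℕ} (r L_C M L_G : ℝ) (hr : 0 < r)
    (C : ℝ → Set (EuclideanSpace ℝ (Fin n)))
    (G : ℝ → EuclideanSpace ℝ (Fin n) → Set (EuclideanSpace ℝ (Fin n)))
    (hC : HypC r L_C C) (hG : HypG M L_G G)
    (S : Set (EuclideanSpace ℝ (Fin n))) (hS : IsClosed S)
    (hSC : ∃ t, 0 ≤ t ∧ (S ∩ C t).Nonempty)
    (θ : ℝ → EuclideanSpace ℝ (Fin n) → ℝ≥0∞)
    (hθlsc : LowerSemicontinuousOn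
      (fun q : ℝ × EuclideanSpace ℝ (Fin n) => θ q.1 q.2) (graphSet C))
    (hθpos : ∀ t x, 0 ≤ t → x ∈ C t → x ∉ S → 0 < θ t x)
    (hθzero : ∀ t x, 0 ≤ t → x ∈ C t → x ∈ S → θ t x = 0)
    (hinv : ∀ t₀ x₀, 0 ≤ t₀ → x₀ ∈ C t₀ → ∀ l₀ : ℝ, θ t₀ x₀ ≤ ENNReal.ofReal l₀ →
      ∃ τ > (0 : ℝ), ∃ x : ℝ → EuclideanSpace ℝ (Fin n),
        IsSweepingSol C G t₀ (t₀ + τ) x ∧ x t₀ = x₀ ∧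
        ∀ s ∈ Ico (0 : ℝ) τ, θ (t₀ + s) (x (t₀ + s)) ≤ ENNReal.ofReal (l₀ - s)) :
    ∀ t x, 0 ≤ t → x ∈ C t → minTime C G S t x ≤ θ t x :=
  comparison_epigraph_weakly_invariant_general r L_C M L_G C G hC hG S θ hθlsc hθpos hinv
end

section
/- Assume Hypotheses (H_C) and (H_G), let S ⊆ ℝⁿ be closed with S ∩ C(t) ≠ ∅ for some t ≥ 0, and let θ : graph(C) → [0, +∞] be upper semicontinuous with θ(t,x) > 0 whenever x ∈ C(t)∖S and θ(t,x) = 0 whenever x ∈ C(t) ∩ S. Assume the hypograph of θ is strongly invariant for the augmented dynamics Γ(τ,x,λ) = {1} × (−N_{C(τ)}(x) + G(τ,x)) × {−1}, i.e.: for every (t₀,x₀) ∈ graph(C), every real λ₀ ≤ θ(t₀,x₀), every τ > 0 and every solution x of the perturbed sweeping process on [t₀, t₀ + τ] with x(t₀) = x₀, one has θ(t₀ + s, x(t₀ + s)) ≥ λ₀ − s for all s ∈ [0, τ]. Then θ(t,x) ≤ T(t,x) for all (t,x) ∈ graph(C), where T is the minimum time function for the target S. -/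
/-!
Along a trajectory that reaches `S` at time `t + a`, strong invariance of the hypograph says that
every real level `l ≤ θ(t, x)` drops by at most `a`, so `l - a ≤ θ(t + a, x(t + a)) = 0`. Hence
`θ(t, x) ≤ a` for every admissible reaching time `a`, that is `θ ≤ T`.
-/

open scoped Pointwise RealInnerProductSpace ENNReal
open Set Metric MeasureTheory

variable {E : Type*} [NormedAddCommGroup E] [InnerProductSpace ℝ E]

theorem ENNReal.le_ofReal_of_forall_le {u : ℝ≥0∞} {a : ℝ}
    (h : ∀ l : ℝ, ENNReal.ofReal l ≤ u → l ≤ a) : u ≤ ENNReal.ofReal a := by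
  by_contra! hlt
  obtain ⟨l, -, hal, hlu⟩ := ENNReal.lt_iff_exists_real_btwn.mp hlt
  exact (ENNReal.ofReal_lt_ofReal_iff'.mp hal).1.not_ge (h l hlu.le)

theorem le_minTime_iff {C : ℝ → Set E} {G : ℝ → E → Set E} {S : Set E} {t₀ : ℝ} {x₀ : E}
    {u : ℝ≥0∞} :
    u ≤ minTime C G S t₀ x₀ ↔ ∀ a : ℝ, 0 ≤ a → ∀ x : ℝ → E,
      IsSweepingSol C G t₀ (t₀ + a) x → x t₀ = x₀ → x (t₀ + a) ∈ S → u ≤ ENNReal.ofReal a := by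
  simp only [minTime, le_sInf_iff, forall_mem_image, mem_ofPred_eq, and_imp,
    forall_exists_index]

/-- Strong invariance of the hypograph of `θ` under the augmented dynamics
`Γ(τ, x, λ) = {1} × (-N_{C(τ)}(x) + G(τ, x)) × {-1}`. -/
def HypographStronglyInvariant (C : ℝ → Set E) (G : ℝ → E → Set E) (θ : ℝ → E → ℝ≥0∞) : Prop :=
  ∀ t₀ x₀, 0 ≤ t₀ → x₀ ∈ C t₀ → ∀ l₀ : ℝ, ENNReal.ofReal l₀ ≤ θ t₀ x₀ →
    ∀ τ > (0 : ℝ), ∀ x : ℝ → E, IsSweepingSol C G t₀ (t₀ + τ) x → x t₀ = x₀ →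
      ∀ s ∈ Icc (0 : ℝ) τ, ENNReal.ofReal (l₀ - s) ≤ θ (t₀ + s) (x (t₀ + s))

theorem HypographStronglyInvariant.le_ofReal_of_reaches {C : ℝ → Set E} {G : ℝ → E → Set E}
    {S : Set E} {θ : ℝ → E → ℝ≥0∞} (hinv : HypographStronglyInvariant C G θ)
    (hθzero : ∀ t x, 0 ≤ t → x ∈ C t → x ∈ S → θ t x = 0)
    {t a : ℝ} {x₀ : E} {x : ℝ → E} (ht : 0 ≤ t) (hx₀ : x₀ ∈ C t) (ha : 0 ≤ a)
    (hsol : IsSweepingSol C G t (t + a) x) (hx : x t = x₀) (hxS : x (t + a) ∈ S) :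
    θ t x₀ ≤ ENNReal.ofReal a := by
  rcases ha.eq_or_lt with rfl | hapos
  · rw [add_zero, hx] at hxS
    simp [hθzero t x₀ ht hx₀ hxS]
  refine ENNReal.le_ofReal_of_forall_le fun l hl => ?_
  have hend := hinv t x₀ ht hx₀ l hl a hapos x hsol hx a ⟨hapos.le, le_rfl⟩
  rw [hθzero _ _ (by linarith) (hsol.1 _ ⟨by linarith, le_rfl⟩) hxS, nonpos_iff_eq_zero,
    ENNReal.ofReal_eq_zero] at hend
  linarith

theorem comparison_hypograph_strongly_invariant_general {n : ℕ}
    (C : ℝ → Set (EuclideanSpace ℝ (Fin n)))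
    (G : ℝ → EuclideanSpace ℝ (Fin n) → Set (EuclideanSpace ℝ (Fin n)))
    (S : Set (EuclideanSpace ℝ (Fin n)))
    (θ : ℝ → EuclideanSpace ℝ (Fin n) → ℝ≥0∞)
    (hθzero : ∀ t x, 0 ≤ t → x ∈ C t → x ∈ S → θ t x = 0)
    (hinv : ∀ t₀ x₀, 0 ≤ t₀ → x₀ ∈ C t₀ → ∀ l₀ : ℝ, ENNReal.ofReal l₀ ≤ θ t₀ x₀ →
      ∀ τ > (0 : ℝ), ∀ x : ℝ → EuclideanSpace ℝ (Fin n),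
        IsSweepingSol C G t₀ (t₀ + τ) x → x t₀ = x₀ →
        ∀ s ∈ Icc (0 : ℝ) τ, ENNReal.ofReal (l₀ - s) ≤ θ (t₀ + s) (x (t₀ + s))) :
    ∀ t x, 0 ≤ t → x ∈ C t → θ t x ≤ minTime C G S t x := fun _ _ ht hx₀ =>
  le_minTime_iff.2 fun _ ha _ hsol hx hxS =>
    HypographStronglyInvariant.le_ofReal_of_reaches hinv hθzero ht hx₀ ha hsol hx hxS

/-- comparison principle (upper bound side). If `θ : graph(C) → [0,∞]` is usc,
positive outside the target, zero on the target, and its hypograph is strongly invariant for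
the augmented dynamics, then `θ ≤ T` on the graph of `C`. -/
theorem comparison_hypograph_strongly_invariant {n : ℕ} (r L_C M L_G : ℝ) (hr : 0 < r)
    (C : ℝ → Set (EuclideanSpace ℝ (Fin n)))
    (G : ℝ → EuclideanSpace ℝ (Fin n) → Set (EuclideanSpace ℝ (Fin n)))
    (hC : HypC r L_C C) (hG : HypG M L_G G)
    (S : Set (EuclideanSpace ℝ (Fin n))) (hS : IsClosed S)
    (hSC : ∃ t, 0 ≤ t ∧ (S ∩ C t).Nonempty)
    (θ : ℝ → EuclideanSpace ℝ (Fin n) → ℝ≥0∞)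
    (hθusc : UpperSemicontinuousOn
      (fun q : ℝ × EuclideanSpace ℝ (Fin n) => θ q.1 q.2) (graphSet C))
    (hθpos : ∀ t x, 0 ≤ t → x ∈ C t → x ∉ S → 0 < θ t x)
    (hθzero : ∀ t x, 0 ≤ t → x ∈ C t → x ∈ S → θ t x = 0)
    (hinv : ∀ t₀ x₀, 0 ≤ t₀ → x₀ ∈ C t₀ → ∀ l₀ : ℝ, ENNReal.ofReal l₀ ≤ θ t₀ x₀ →
      ∀ τ > (0 : ℝ), ∀ x : ℝ → EuclideanSpace ℝ (Fin n),
        IsSweepingSol C G t₀ (t₀ + τ) x → x t₀ = x₀ →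
        ∀ s ∈ Icc (0 : ℝ) τ, ENNReal.ofReal (l₀ - s) ≤ θ (t₀ + s) (x (t₀ + s))) :
    ∀ t x, 0 ≤ t → x ∈ C t → θ t x ≤ minTime C G S t x :=
  comparison_hypograph_strongly_invariant_general C G S θ hθzero hinv
end
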